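/- Nesting of maximal robust M-step hold control invariant sets: if M̂ divides M, then the maximal robust M-step hold control invariant set is contained in the maximal robust M̂-step hold control invariant set, i.e., C^M_∞ ⊆ C^{M̂}_∞. -/

import Mathlib

/-!
Let `M = M̂ q` and let `C` be robust `M`-step hold control invariant. Holding one input for
`M̂ (k + 1)` steps is the same as holding it for `M̂` steps and then for `M̂ k` more, so a
state that robustly reaches `C` in `M̂ (k + 1)` held steps robustly reaches, in `M̂` held steps,
a state that reaches `C` in `M̂ k` held steps. Hence the union over `k ≥ 1` of the states of `X`
that robustly reach `C` in `M̂ k` held steps is robust `M̂`-step hold control invariant, and it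
contains `C` (take `k = q`).
-/

/-- Robust `M`-step hold precursor set `Pre^M(S, W)`: states from which a single
admissible held input robustly keeps the state in `X` for steps `1,…,M-1` and
drives it into `S` at step `M`, for all disturbances in `W`. -/
def holdPre {n m o : ℕ} (A : Matrix (Fin n) (Fin n) ℝ)
    (B : Matrix (Fin n) (Fin m) ℝ) (E : Matrix (Fin n) (Fin o) ℝ)
    (X : Set (Fin n → ℝ)) (U : Set (Fin m → ℝ)) (W : Set (Fin o → ℝ))
    (M : ℕ) (S : Set (Fin n → ℝ)) : Set (Fin n → ℝ) :=
  {x0 | ∃ u ∈ U, ∀ w : ℕ → (Fin o → ℝ), (∀ t, w t ∈ W) →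
    ∀ x : ℕ → (Fin n → ℝ), x 0 = x0 →
      (∀ t, x (t + 1) = A.mulVec (x t) + B.mulVec u + E.mulVec (w t)) →
      (∀ t, 0 < t → t < M → x t ∈ X) ∧ x M ∈ S}

/-- `C` is robust `M`-step hold control invariant: `C ⊆ X` and from every state
of `C` there is an admissible held input robustly keeping the state in `X` at
every step and returning it to `C` after `M` steps. -/
def IsMSHCtrlInv {n m o : ℕ} (A : Matrix (Fin n) (Fin n) ℝ)
    (B : Matrix (Fin n) (Fin m) ℝ) (E : Matrix (Fin n) (Fin o) ℝ)
    (X : Set (Fin n → ℝ)) (U : Set (Fin m → ℝ)) (W : Set (Fin o → ℝ))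
    (M : ℕ) (C : Set (Fin n → ℝ)) : Prop :=
  C ⊆ X ∧ C ⊆ holdPre A B E X U W M C

def splice {α : Type*} (a : ℕ) (f g : ℕ → α) : ℕ → α :=
  fun t => if t < a then f t else g (t - a)

section splice

variable {α β : Type*}

@[simp]
theorem splice_add_right (a t : ℕ) (f g : ℕ → α) : splice a f g (t + a) = g t := by
  simp [splice]

theorem splice_mem {s : Set α} {f g : ℕ → α} (a : ℕ) (hf : ∀ t, f t ∈ s) (hg : ∀ t, g t ∈ s)
    (t : ℕ) : splice a f g t ∈ s := by
  unfold splice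
  split_ifs
  exacts [hf t, hg _]

theorem splice_trajectory {step : α → β → α} {x x' : ℕ → α} {w w' : ℕ → β} (a : ℕ)
    (hx : ∀ t, x (t + 1) = step (x t) (w t)) (hx' : ∀ t, x' (t + 1) = step (x' t) (w' t))
    (h₀ : x' 0 = x a) (t : ℕ) :
    splice a x x' (t + 1) = step (splice a x x' t) (splice a w w' t) := by
  unfold splice
  rcases lt_trichotomy (t + 1) a with h | h | h
  · simp only [h, show t < a by omega, if_true]
    exact hx t
  · subst h
    simp only [lt_irrefl, lt_add_one, if_true, if_false, Nat.sub_self, h₀]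
    exact hx t
  · simp only [show ¬t + 1 < a by omega, show ¬t < a by omega, if_false,
      show t + 1 - a = t - a + 1 by omega]
    exact hx' _

end splice

section holdPre

variable {n m o : ℕ} {A : Matrix (Fin n) (Fin n) ℝ} {B : Matrix (Fin n) (Fin m) ℝ}
  {E : Matrix (Fin n) (Fin o) ℝ} {X : Set (Fin n → ℝ)} {U : Set (Fin m → ℝ)}
  {W : Set (Fin o → ℝ)}

theorem holdPre_mono {M : ℕ} {S T : Set (Fin n → ℝ)} (hST : S ⊆ T) :
    holdPre A B E X U W M S ⊆ holdPre A B E X U W M T := by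
  rintro x₀ ⟨u, hu, h⟩
  refine ⟨u, hu, fun w hw x hx₀ hx => ?_⟩
  obtain ⟨hX, hS⟩ := h w hw x hx₀ hx
  exact ⟨hX, hST hS⟩

theorem holdPre_add_subset {a b : ℕ} (ha : 0 < a) (hb : 0 < b) (S : Set (Fin n → ℝ)) :
    holdPre A B E X U W (a + b) S ⊆ holdPre A B E X U W a (X ∩ holdPre A B E X U W b S) := by
  rintro x₀ ⟨u, hu, h⟩
  refine ⟨u, hu, fun w hw x hx₀ hx => ?_⟩
  have hX := (h w hw x hx₀ hx).1
  refine ⟨fun t ht hta => hX t ht (by omega), hX a ha (by omega), u, hu,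
    fun w' hw' x' hx'₀ hx' => ?_⟩
  obtain ⟨hX', hS'⟩ := h (splice a w w') (splice_mem a hw hw') (splice a x x')
    (by simp [splice, ha, hx₀])
    (splice_trajectory (step := fun y v => A.mulVec y + B.mulVec u + E.mulVec v) a hx hx' hx'₀)
  refine ⟨fun t ht htb => ?_, ?_⟩
  · simpa using hX' (t + a) (by omega) (by omega)
  · simpa [add_comm a b] using hS'

theorem IsMSHCtrlInv.exists_superset_of_mul {N q : ℕ} {C : Set (Fin n → ℝ)} (hN : 0 < N)
    (hq : 0 < q) (hC : IsMSHCtrlInv A B E X U W (N * q) C) :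
    ∃ D, C ⊆ D ∧ IsMSHCtrlInv A B E X U W N D := by
  set D := ⋃ k : ℕ, X ∩ holdPre A B E X U W (N * (k + 1)) C
  have hCD : C ⊆ D := fun y hy =>
    Set.mem_iUnion.2 ⟨q - 1, hC.1 hy, by simpa [Nat.sub_add_cancel hq] using hC.2 hy⟩
  refine ⟨D, hCD, Set.iUnion_subset fun k => Set.inter_subset_left, ?_⟩
  refine Set.iUnion_subset fun k => ?_
  rcases k with _ | k
  · simpa using Set.inter_subset_right.trans (holdPre_mono hCD)
  · calc X ∩ holdPre A B E X U W (N * (k + 1 + 1)) C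
        ⊆ holdPre A B E X U W (N + N * (k + 1)) C := by
          rw [show N * (k + 1 + 1) = N + N * (k + 1) by ring]
          exact Set.inter_subset_right
      _ ⊆ holdPre A B E X U W N (X ∩ holdPre A B E X U W (N * (k + 1)) C) :=
          holdPre_add_subset hN (by positivity) C
      _ ⊆ holdPre A B E X U W N D := holdPre_mono (Set.subset_iUnion_of_subset k subset_rfl)

end holdPre

theorem maximal_mshInv_nested_general {n m o : ℕ} (A : Matrix (Fin n) (Fin n) ℝ)
    (B : Matrix (Fin n) (Fin m) ℝ) (E : Matrix (Fin n) (Fin o) ℝ)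
    (X : Set (Fin n → ℝ)) (U : Set (Fin m → ℝ)) (W : Set (Fin o → ℝ))
    (M Mhat : ℕ) (hM : 0 < M) (hdvd : Mhat ∣ M) :
    ⋃₀ {C | IsMSHCtrlInv A B E X U W M C} ⊆
      ⋃₀ {C | IsMSHCtrlInv A B E X U W Mhat C} := by
  rintro x ⟨C, hC, hx⟩
  obtain ⟨q, rfl⟩ := hdvd
  obtain ⟨hMhat, hq⟩ := CanonicallyOrderedAdd.mul_pos.1 hM
  obtain ⟨D, hCD, hD⟩ := IsMSHCtrlInv.exists_superset_of_mul hMhat hq hC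
  exact ⟨D, hD, hCD hx⟩

/-- Nesting of maximal robust `M`-step hold control invariant sets: if `M̂`
divides `M`, then `C^M_∞ ⊆ C^{M̂}_∞`, where the maximal set is the union of all
robust `M`-step hold control invariant sets. -/
theorem maximal_mshInv_nested {n m o : ℕ} (A : Matrix (Fin n) (Fin n) ℝ)
    (B : Matrix (Fin n) (Fin m) ℝ) (E : Matrix (Fin n) (Fin o) ℝ)
    (X : Set (Fin n → ℝ)) (U : Set (Fin m → ℝ)) (W : Set (Fin o → ℝ))
    (M Mhat : ℕ) (hM : 0 < M) (hMhat : 0 < Mhat) (hdvd : Mhat ∣ M) :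
    ⋃₀ {C | IsMSHCtrlInv A B E X U W M C} ⊆
      ⋃₀ {C | IsMSHCtrlInv A B E X U W Mhat C} :=
  maximal_mshInv_nested_general A B E X U W M Mhat hM hdvd
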